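/- The multivariate Cauchy density p(x,θ) = Γ((d+1)/2) π^{-(d+1)/2} |R|^{-1/2} θ (θ² + xᵀR⁻¹x)^{-(d+1)/2}, with R symmetric positive definite and θ > 0, satisfies ∂²p/∂θ² = -Tr(R · Hₓ p). -/

import Mathlib

open Real Matrix

/-- Partial derivative of `f : ℝ^d → ℝ` along coordinate `i`. -/
noncomputable def coordPDeriv {d : ℕ} (i : Fin d) (f : (Fin d → ℝ) → ℝ) :
    (Fin d → ℝ) → ℝ :=
  fun x => deriv (fun t => f (Function.update x i t)) (x i)

private lemma update_eq_add {d : ℕ} (y : Fin d → ℝ) (j : Fin d) (t : ℝ) :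
    Function.update y j t = y + (t - y j) • (Pi.single j 1 : Fin d → ℝ) := by
  funext k
  rcases eq_or_ne k j with rfl | h
  · simp
  · simp [Function.update_of_ne h, Pi.single_eq_of_ne h]

private lemma quad_update {d : ℕ} (A : Matrix (Fin d) (Fin d) ℝ) (hA : A.IsSymm)
    (y : Fin d → ℝ) (j : Fin d) (t : ℝ) :
    Function.update y j t ⬝ᵥ A.mulVec (Function.update y j t)
      = y ⬝ᵥ A.mulVec y + (t - y j) * (2 * A.mulVec y j) + (t - y j)^2 * A j j := by
  have hAij : ∀ i, A i j = A j i := fun i => hA.apply j i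
  rw [update_eq_add]
  simp only [Matrix.mulVec_add, Matrix.mulVec_smul, dotProduct_add,
    add_dotProduct, dotProduct_smul, smul_dotProduct,
    smul_eq_mul, Matrix.mulVec_single_one, Matrix.col, mul_one, single_dotProduct, one_mul]
  have h1 : y ⬝ᵥ Aᵀ j = A.mulVec y j := by
    simp only [dotProduct, Matrix.mulVec]
    exact Finset.sum_congr rfl fun i _ => by show y i * A i j = A j i * y i; rw [hAij]; ring
  rw [h1, Matrix.transpose_apply]; ring

private lemma mulVec_update {d : ℕ} (A : Matrix (Fin d) (Fin d) ℝ)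
    (y : Fin d → ℝ) (i j : Fin d) (t : ℝ) :
    A.mulVec (Function.update y i t) j = A.mulVec y j + (t - y i) * A j i := by
  rw [update_eq_add]
  simp only [Matrix.mulVec_add, Matrix.mulVec_smul, Pi.add_apply, Pi.smul_apply,
    smul_eq_mul, Matrix.mulVec_single_one, Matrix.col_apply, mul_one]

private lemma hasDerivAt_quad {d : ℕ} (A : Matrix (Fin d) (Fin d) ℝ) (hA : A.IsSymm)
    (y : Fin d → ℝ) (j : Fin d) :
    HasDerivAt (fun t => Function.update y j t ⬝ᵥ A.mulVec (Function.update y j t))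
      (2 * A.mulVec y j) (y j) := by
  have heq : (fun t => Function.update y j t ⬝ᵥ A.mulVec (Function.update y j t))
      = fun t => y ⬝ᵥ A.mulVec y + (t - y j) * (2 * A.mulVec y j) + (t - y j)^2 * A j j :=
    funext fun t => quad_update A hA y j t
  rw [heq]
  have h1 : HasDerivAt (fun t : ℝ => t - y j) 1 (y j) := (hasDerivAt_id _).sub_const _
  have h2 := (h1.mul_const (2 * A.mulVec y j)).const_add (y ⬝ᵥ A.mulVec y)
  have h3 := (h1.pow 2).mul_const (A j j)
  refine (h2.add h3).congr_deriv ?_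
  simp

private lemma hasDerivAt_mulVec_upd {d : ℕ} (A : Matrix (Fin d) (Fin d) ℝ)
    (y : Fin d → ℝ) (i j : Fin d) :
    HasDerivAt (fun t => A.mulVec (Function.update y i t) j) (A j i) (y i) := by
  have heq : (fun t => A.mulVec (Function.update y i t) j)
      = fun t => A.mulVec y j + (t - y i) * A j i := funext fun t => mulVec_update A y i j t
  rw [heq]
  simpa using (((hasDerivAt_id (y i)).sub_const (y i)).mul_const (A j i)).const_add (A.mulVec y j)

/-- The multivariate Cauchy density
`p(x,θ) = Γ((d+1)/2) π^{-(d+1)/2} |det R|^{-1/2} θ (θ² + xᵀR⁻¹x)^{-(d+1)/2}`,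
with `R` symmetric positive definite, satisfies `∂²p/∂θ² = -Tr(R · Hₓ p)`. -/
theorem multivariate_cauchy_pde {d : ℕ}
    (R : Matrix (Fin d) (Fin d) ℝ) (hR : R.PosDef) (hRsym : R.IsSymm)
    (θ : ℝ) (hθ : 0 < θ) (x : Fin d → ℝ)
    (p : (Fin d → ℝ) → ℝ → ℝ)
    (hp : ∀ y t, p y t = Real.Gamma ((d + 1 : ℝ) / 2) * π ^ (-((d : ℝ) + 1) / 2) *
        |R.det| ^ (-(1 : ℝ) / 2) * t * (t ^ 2 + y ⬝ᵥ R⁻¹.mulVec y) ^ (-((d : ℝ) + 1) / 2)) :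
    deriv (deriv (fun t => p x t)) θ
      = - Matrix.trace (R * Matrix.of
          (fun i j => coordPDeriv i (coordPDeriv j (fun y => p y θ)) x)) := by
  classical
  set A := R⁻¹ with hA_def
  set ν : ℝ := -((d : ℝ) + 1) / 2 with hν
  set c : ℝ := Real.Gamma ((d + 1 : ℝ) / 2) * π ^ ν * |R.det| ^ (-(1 : ℝ) / 2) with hc
  have hAsymm : A.IsSymm := by
    rw [Matrix.IsSymm, hA_def, Matrix.transpose_nonsing_inv, hRsym.eq]
  have hdet : IsUnit R.det := isUnit_iff_ne_zero.mpr hR.det_pos.ne'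
  have hRA : R * A = 1 := Matrix.mul_nonsing_inv R hdet
  have hq0 : ∀ y : Fin d → ℝ, 0 ≤ y ⬝ᵥ A.mulVec y := by
    intro y
    have := (hR.inv).posSemidef.re_dotProduct_nonneg y
    simpa using this
  have hupos : ∀ t : ℝ, 0 < t → ∀ y : Fin d → ℝ, 0 < t ^ 2 + y ⬝ᵥ A.mulVec y :=
    fun t ht y => add_pos_of_pos_of_nonneg (pow_pos ht 2) (hq0 y)
  -- first spatial derivative
  have hg : ∀ (y : Fin d → ℝ) (j : Fin d),
      coordPDeriv j (fun y => p y θ) y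
        = c * θ * (2 * A.mulVec y j * ν * (θ ^ 2 + y ⬝ᵥ A.mulVec y) ^ (ν - 1)) := by
    intro y j
    have h1 : HasDerivAt
        (fun t => θ ^ 2 + Function.update y j t ⬝ᵥ A.mulVec (Function.update y j t))
        (2 * A.mulVec y j) (y j) := (hasDerivAt_quad A hAsymm y j).const_add _
    have hne : (θ ^ 2 + Function.update y j (y j) ⬝ᵥ A.mulVec (Function.update y j (y j))) ≠ 0 := by
      rw [Function.update_eq_self]; exact (hupos θ hθ y).ne'
    have h2 := (h1.rpow_const (p := ν) (Or.inl hne)).const_mul (c * θ)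
    have heq : (fun t => p (Function.update y j t) θ)
        = fun t => c * θ *
          ((θ ^ 2 + Function.update y j t ⬝ᵥ A.mulVec (Function.update y j t)) ^ ν) :=
      funext fun t => hp _ θ
    unfold coordPDeriv
    rw [heq, h2.deriv, Function.update_eq_self]
  -- Hessian entries
  have hH : ∀ i j : Fin d,
      coordPDeriv i (coordPDeriv j (fun y => p y θ)) x
        = c * θ * (2 * A j i * ν * (θ ^ 2 + x ⬝ᵥ A.mulVec x) ^ (ν - 1)
            + 2 * A.mulVec x j * ν *
              (2 * A.mulVec x i * (ν - 1) * (θ ^ 2 + x ⬝ᵥ A.mulVec x) ^ (ν - 1 - 1))) := by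
    intro i j
    have hlin : HasDerivAt (fun t => 2 * A.mulVec (Function.update x i t) j * ν)
        (2 * A j i * ν) (x i) :=
      ((hasDerivAt_mulVec_upd A x i j).const_mul 2).mul_const ν
    have h1 : HasDerivAt
        (fun t => θ ^ 2 + Function.update x i t ⬝ᵥ A.mulVec (Function.update x i t))
        (2 * A.mulVec x i) (x i) := (hasDerivAt_quad A hAsymm x i).const_add _
    have hne : (θ ^ 2 + Function.update x i (x i) ⬝ᵥ A.mulVec (Function.update x i (x i))) ≠ 0 := by
      rw [Function.update_eq_self]; exact (hupos θ hθ x).ne'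
    have h2 := h1.rpow_const (p := ν - 1) (Or.inl hne)
    have h3 := (hlin.mul h2).const_mul (c * θ)
    have heq : (fun t => coordPDeriv j (fun y => p y θ) (Function.update x i t))
        = fun t => c * θ * (2 * A.mulVec (Function.update x i t) j * ν *
            ((θ ^ 2 + Function.update x i t ⬝ᵥ A.mulVec (Function.update x i t)) ^ (ν - 1))) :=
      funext fun t => hg _ j
    have hunf : coordPDeriv i (coordPDeriv j fun y => p y θ) x
        = deriv (fun t => coordPDeriv j (fun y => p y θ) (Function.update x i t)) (x i) := rfl
    rw [hunf, heq]
    refine h3.deriv.trans ?_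
    simp only [Function.update_eq_self]
  -- time derivatives
  set Q : ℝ := x ⬝ᵥ A.mulVec x with hQ_def
  have hf1 : ∀ t : ℝ, 0 < t → HasDerivAt (fun t => p x t)
      (c * (t ^ 2 + Q) ^ ν + 2 * c * ν * t ^ 2 * (t ^ 2 + Q) ^ (ν - 1)) t := by
    intro t ht
    have hpow : HasDerivAt (fun t : ℝ => t ^ 2 + Q) ((2 : ℕ) * t ^ 1) t :=
      (hasDerivAt_pow 2 t).add_const Q
    have hrpow := hpow.rpow_const (p := ν) (Or.inl (hupos t ht x).ne')
    have hct : HasDerivAt (fun t : ℝ => c * t) (c * 1) t := (hasDerivAt_id t).const_mul c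
    have heq : (fun t => p x t) = fun t => c * t * ((t ^ 2 + Q) ^ ν) :=
      funext fun t => hp x t
    rw [heq]
    refine (hct.mul hrpow).congr_deriv ?_
    push_cast
    ring
  have hev : deriv (fun t => p x t) =ᶠ[nhds θ]
      fun t => c * (t ^ 2 + Q) ^ ν + 2 * c * ν * t ^ 2 * (t ^ 2 + Q) ^ (ν - 1) := by
    filter_upwards [Ioi_mem_nhds hθ] with t ht
    exact (hf1 t ht).deriv
  rw [hev.deriv_eq]
  -- second time derivative
  have hpowθ : HasDerivAt (fun t : ℝ => t ^ 2 + Q) ((2 : ℕ) * θ ^ 1) θ :=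
    (hasDerivAt_pow 2 θ).add_const Q
  have huθ : (0 : ℝ) < θ ^ 2 + Q := hupos θ hθ x
  have hterm1 := (hpowθ.rpow_const (p := ν) (Or.inl huθ.ne')).const_mul c
  have hterm2 := ((hasDerivAt_pow 2 θ).const_mul (2 * c * ν)).mul
      (hpowθ.rpow_const (p := ν - 1) (Or.inl huθ.ne'))
  have htot := hterm1.add hterm2
  refine htot.deriv.trans ?_
  -- trace computation
  have htrace : Matrix.trace (R * Matrix.of
        (fun i j => coordPDeriv i (coordPDeriv j (fun y => p y θ)) x))
      = ∑ i, ∑ k, R i k * coordPDeriv k (coordPDeriv i (fun y => p y θ)) x := by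
    have h0 : ∀ M : Matrix (Fin d) (Fin d) ℝ, M.trace = ∑ i, M i i := fun M => rfl
    rw [h0]
    simp only [Matrix.mul_apply, Matrix.of_apply]
  rw [htrace]
  simp only [hH]
  have key1 : ∑ i, ∑ k, (R i k * A i k) = (d : ℝ) := by
    have h1 : ∀ i, ∑ k, R i k * A i k = (R * Aᵀ) i i := by
      intro i; simp [Matrix.mul_apply, Matrix.transpose_apply]
    simp only [h1]
    have h2 : ∑ i, (R * Aᵀ) i i = (R * Aᵀ).trace := rfl
    rw [h2, hAsymm.eq, hRA, Matrix.trace_one]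
    simp
  have key2 : ∑ i, ∑ k, (R i k * (A.mulVec x k * A.mulVec x i)) = Q := by
    have h1 : ∀ i, ∑ k, R i k * (A.mulVec x k * A.mulVec x i)
        = R.mulVec (A.mulVec x) i * A.mulVec x i := by
      intro i
      simp only [Matrix.mulVec, dotProduct]
      rw [Finset.sum_mul]
      exact Finset.sum_congr rfl fun k _ => by ring
    simp only [h1]
    rw [Matrix.mulVec_mulVec, hRA, Matrix.one_mulVec, hQ_def]
    rfl
  have hsum : ∑ i, ∑ k, R i k * (c * θ * (2 * A i k * ν * (θ ^ 2 + Q) ^ (ν - 1)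
        + 2 * A.mulVec x i * ν *
          (2 * A.mulVec x k * (ν - 1) * (θ ^ 2 + Q) ^ (ν - 1 - 1))))
      = (c * θ * 2 * ν * (θ ^ 2 + Q) ^ (ν - 1)) * (∑ i, ∑ k, (R i k * A i k))
        + (c * θ * 4 * ν * (ν - 1) * (θ ^ 2 + Q) ^ (ν - 1 - 1)) *
          (∑ i, ∑ k, (R i k * (A.mulVec x k * A.mulVec x i))) := by
    rw [Finset.mul_sum, Finset.mul_sum, ← Finset.sum_add_distrib]
    refine Finset.sum_congr rfl fun i _ => ?_
    rw [Finset.mul_sum, Finset.mul_sum, ← Finset.sum_add_distrib]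
    refine Finset.sum_congr rfl fun k _ => ?_
    ring
  rw [hsum, key1, key2]
  -- final algebra
  have hd : (d : ℝ) = -2 * ν - 1 := by rw [hν]; ring
  have e2 : (θ ^ 2 + Q) ^ (ν - 1) = (θ ^ 2 + Q) ^ (ν - 1 - 1) * (θ ^ 2 + Q) := by
    rw [← Real.rpow_add_one huθ.ne' (ν - 1 - 1)]; norm_num
  have e1 : (θ ^ 2 + Q) ^ ν = (θ ^ 2 + Q) ^ (ν - 1 - 1) * (θ ^ 2 + Q) * (θ ^ 2 + Q) := by
    rw [← e2, ← Real.rpow_add_one huθ.ne' (ν - 1)]; norm_num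
  rw [hd, e2]
  push_cast
  ring
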